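/- arXiv:2507.14370 — 2 statements merged into one kernel-verified Lean document; each statement's English description precedes it below -/
import Mathlib

section
/- Let π be a unitary permutation matrix in the third level of the Clifford Hierarchy and let d be a diagonal unitary matrix. Then πd is in the third level of the Clifford Hierarchy if and only if for every Pauli X string X⃗, the matrix π X⃗ d X⃗ d⁻¹ π⁻¹ is a Clifford unitary. -/
/-- Basis states of `n` qubits. -/
abbrev QState (n : ℕ) := Fin n → ZMod 2

/-- `2^n × 2^n` complex matrices, indexed by basis states of `n` qubits. -/
abbrev QMat (n : ℕ) := Matrix (QState n) (QState n) ℂ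

noncomputable section

namespace CHPaper

/-- Pauli X string: the permutation matrix adding the vector `v` (bit flips). -/
def XStr {n : ℕ} (v : QState n) : QMat n :=
  Matrix.of fun x y => if x = y + v then (1 : ℂ) else 0

/-- Pauli Z string: diagonal sign matrix determined by the vector `v`. -/
def ZStr {n : ℕ} (v : QState n) : QMat n :=
  Matrix.diagonal fun x => (-1 : ℂ) ^ (ZMod.val (∑ i, v i * x i))

/-- The `n`-qubit Pauli group (with phases that are fourth roots of unity). -/
def Pauli (n : ℕ) : Set (QMat n) :=
  {M | ∃ (c : ℂ) (v w : QState n), c ^ 4 = 1 ∧ M = c • (XStr v * ZStr w)}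

/-- The Clifford Hierarchy: level 1 is the Pauli group, and
`U ∈ CH n (k+1)` iff `U` is unitary and conjugates every Pauli into `CH n k`. -/
def CH (n : ℕ) : ℕ → Set (QMat n)
  | 0 => {1}
  | 1 => Pauli n
  | (k+2) => {U | U ∈ Matrix.unitaryGroup (QState n) ℂ ∧
      ∀ P ∈ Pauli n, U * P * star U ∈ CH n (k+1)}

/-- Membership in some finite level of the Clifford Hierarchy. -/
def InCH {n : ℕ} (M : QMat n) : Prop := ∃ k, M ∈ CH n k

/-- The permutation matrix of a permutation of basis states. -/
def permMat {n : ℕ} (σ : Equiv.Perm (QState n)) : QMat n :=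
  Matrix.of fun x y => if x = σ y then (1 : ℂ) else 0

/-- A matrix is a permutation matrix. -/
def IsPermMat {n : ℕ} (M : QMat n) : Prop :=
  ∃ σ : Equiv.Perm (QState n), M = permMat σ

/-- A monomial (generalized permutation) matrix: exactly one nonzero entry in
each row and column. -/
def IsMonomial {n : ℕ} (M : QMat n) : Prop :=
  ∃ (σ : Equiv.Perm (QState n)) (d : QState n → ℂ), (∀ x, d x ≠ 0) ∧
    M = Matrix.of fun x y => if x = σ y then d y else 0

/-! Write `C v = π X⃗ d X⃗ d⁻¹ π⁻¹`. Since `X⃗² = 1`, unitarity gives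
`C v = (π X⃗ π⁻¹) (π d X⃗ (π d)⁻¹)`, and since the diagonal `d` commutes with `Z⃗`,
`(π d) X⃗ Z⃗ (π d)⁻¹ = (π X⃗ π⁻¹) (C v) (π Z⃗ π⁻¹)`. As `π ∈ 𝒞ℋ₃`, the outer factors
are Clifford, and the Clifford group is closed under products and unit scalars, so either
side of the equivalence yields the other. -/

section Conjugation

variable {m R : Type*} [Fintype m] [DecidableEq m] [CommRing R] [StarRing R]
  {U D : Matrix m m R}

theorem conj_commutator_eq_mul_conj (hU : U ∈ Matrix.unitaryGroup m R)
    (hD : D ∈ Matrix.unitaryGroup m R) (A : Matrix m m R) :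
    U * A * D * A * D⁻¹ * U⁻¹ = U * A * star U * (U * D * A * star (U * D)) := by
  rw [Matrix.inv_eq_left_inv (Unitary.star_mul_self_of_mem hD),
    Matrix.inv_eq_left_inv (Unitary.star_mul_self_of_mem hU), star_mul]
  simp only [mul_assoc]
  rw [← mul_assoc (star U) U, Unitary.star_mul_self_of_mem hU, one_mul]

theorem conj_mul_eq_mul_conj_commutator (hU : U ∈ Matrix.unitaryGroup m R)
    (hD : D ∈ Matrix.unitaryGroup m R) {A B : Matrix m m R} (hA : A * A = 1)
    (hB : Commute B (star D)) :
    U * D * (A * B) * star (U * D) =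
      U * A * star U * (U * A * D * A * D⁻¹ * U⁻¹) * (U * B * star U) := by
  rw [conj_commutator_eq_mul_conj hU hD, star_mul]
  simp only [mul_assoc]
  simp only [← mul_assoc (star U) U, Unitary.star_mul_self_of_mem hU, one_mul]
  rw [← mul_assoc A A, hA, one_mul, ← mul_assoc B, hB.eq, mul_assoc]

end Conjugation

variable {n : ℕ}

theorem XStr_zero : XStr (0 : QState n) = 1 := by
  ext
  simp [XStr, Matrix.one_apply]

theorem XStr_mul_self (v : QState n) : XStr v * XStr v = 1 := by
  have hv : -v = v := funext fun i => ZMod.neg_eq_self_mod_two (v i)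
  have hflip (x z : QState n) : x = z + v ↔ z = x + v := by
    rw [← sub_eq_iff_eq_add, sub_eq_add_neg, hv, eq_comm]
  ext x y
  simp [XStr, Matrix.mul_apply, Matrix.one_apply, hflip x, eq_comm (a := y)]

theorem ZStr_commute_of_isDiag (w : QState n) {D : QMat n} (hD : D.IsDiag) :
    Commute (ZStr w) D := by
  rw [← hD.diagonal_diag]
  exact Matrix.commute_diagonal _ _

theorem XStr_mem_Pauli (v : QState n) : XStr v ∈ Pauli n :=
  ⟨1, v, 0, one_pow 4, by simp [ZStr]⟩

theorem ZStr_mem_Pauli (w : QState n) : ZStr w ∈ Pauli n :=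
  ⟨1, 0, w, one_pow 4, by rw [XStr_zero, one_mul, one_smul]⟩

theorem mem_unitary_of_pow_eq_one {c : ℂ} {k : ℕ} (hc : c ^ k = 1) (hk : k ≠ 0) :
    c ∈ unitary ℂ := by
  rw [Unitary.mem_iff_star_mul_self, Complex.star_def, Complex.conj_mul',
    Complex.norm_eq_one_of_pow_eq_one hc hk, Complex.ofReal_one, one_pow]

theorem mul_mem_CH_two {U V : QMat n} (hU : U ∈ CH n 2) (hV : V ∈ CH n 2) :
    U * V ∈ CH n 2 := by
  refine ⟨mul_mem hU.1 hV.1, fun P hP => ?_⟩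
  have hconj : U * V * P * star (U * V) = U * (V * P * star V) * star U := by
    simp only [star_mul, mul_assoc]
  exact hconj ▸ hU.2 _ (hV.2 P hP)

theorem smul_mem_CH_add_two {c : ℂ} (hc : c ∈ unitary ℂ) {k : ℕ} {U : QMat n}
    (hU : U ∈ CH n (k + 2)) :
    c • U ∈ CH n (k + 2) := by
  refine ⟨Unitary.smul_mem_of_mem hc hU.1, fun P hP => ?_⟩
  have hconj : c • U * P * star (c • U) = U * P * star U := by
    simp only [star_smul, Matrix.smul_mul, Matrix.mul_smul, smul_smul,
      Unitary.star_mul_self_of_mem hc, one_smul]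
  exact hconj ▸ hU.2 P hP

theorem perm_mul_diag_mem_CH3_iff_general {n : ℕ}
    (π d : QMat n) (hπ3 : π ∈ CH n 3)
    (hd : d.IsDiag) (hdu : d ∈ Matrix.unitaryGroup (QState n) ℂ) :
    π * d ∈ CH n 3 ↔
      ∀ v : QState n, π * XStr v * d * XStr v * d⁻¹ * π⁻¹ ∈ CH n 2 := by
  obtain ⟨hπu, hπP⟩ := hπ3
  constructor
  · rintro ⟨-, hπdP⟩ v
    rw [conj_commutator_eq_mul_conj hπu hdu]
    exact mul_mem_CH_two (hπP _ (XStr_mem_Pauli v)) (hπdP _ (XStr_mem_Pauli v))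
  · refine fun h => ⟨mul_mem hπu hdu, ?_⟩
    rintro _ ⟨c, v, w, hc, rfl⟩
    rw [Matrix.mul_smul, Matrix.smul_mul, conj_mul_eq_mul_conj_commutator hπu hdu
      (XStr_mul_self v) (ZStr_commute_of_isDiag w hd.conjTranspose)]
    exact smul_mem_CH_add_two (mem_unitary_of_pow_eq_one hc four_ne_zero) <|
      mul_mem_CH_two (mul_mem_CH_two (hπP _ (XStr_mem_Pauli v)) (h v)) (hπP _ (ZStr_mem_Pauli w))

/-- for a permutation matrix π in CH₃ and a diagonal unitary d,
π d is in CH₃ iff π X⃗ d X⃗ d⁻¹ π⁻¹ is Clifford for every Pauli X string X⃗. -/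
theorem perm_mul_diag_mem_CH3_iff {n : ℕ}
    (π d : QMat n) (hπ : IsPermMat π) (hπ3 : π ∈ CH n 3)
    (hd : d.IsDiag) (hdu : d ∈ Matrix.unitaryGroup (QState n) ℂ) :
    π * d ∈ CH n 3 ↔
      ∀ v : QState n, π * XStr v * d * XStr v * d⁻¹ * π⁻¹ ∈ CH n 2 :=
  perm_mul_diag_mem_CH3_iff_general π d hπ3 hd hdu

end CHPaper
end
end

section
/- If a controlled-U gate (|0⟩⟨0|⊗I + |1⟩⟨1|⊗U for a unitary U) is in the Clifford Hierarchy, then U is in the Clifford Hierarchy and U^{2^k} = I for some nonnegative integer k. Consequently, any permutation whose cycle structure (on m > k−1 qubits, for a length-k cycle structure) lies in the Clifford Hierarchy must have all non-trivial cycle lengths equal to powers of two: it must be a (2^{k₀}, 2^{k₁}, …, 2^{k_N})-cycle with each kᵢ ≥ 1. -/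
noncomputable section

namespace CHPaper

/-- The controlled-U gate |0⟩⟨0| ⊗ I + |1⟩⟨1| ⊗ U, with control on the first
qubit. -/
def controlled {m : ℕ} (U : QMat m) : QMat (m + 1) :=
  Matrix.of fun x y =>
    if x 0 = 0 then (if y = x then (1 : ℂ) else 0)
    else if y 0 = 1 then U (fun i => x i.succ) (fun i => y i.succ) else 0

/-! Conjugation by an affine permutation of `𝔽₂ᵐ` maps Pauli strings to Pauli strings, so it
preserves every level of the Clifford Hierarchy. At most `m` points of `𝔽₂ᵐ` lie on an affine
hyperplane, so some affine permutation `π` moves the support of `σ` into the half-space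
`{x | x 0 = 1}`. Then `π σ π⁻¹` fixes the other half-space pointwise, i.e. it is a controlled
permutation `C(τ)`, and the Anderson–Weippert hypothesis gives `τ ^ 2 ^ k = 1`. Hence
`σ ^ 2 ^ k = 1`, so every cycle length divides `2 ^ k`, and it is at least `2`. -/

section PermMat

variable {n : ℕ}

theorem permMat_eq_permMatrixHom (σ : Equiv.Perm (QState n)) :
    permMat σ = Matrix.permMatrixHom σ := by
  ext x y
  simp [permMat, PEquiv.toMatrix_apply, Equiv.eq_symm_apply, eq_comm]

theorem permMat_mul (σ τ : Equiv.Perm (QState n)) :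
    permMat (σ * τ) = permMat σ * permMat τ := by
  simp only [permMat_eq_permMatrixHom, map_mul]

theorem permMat_pow (σ : Equiv.Perm (QState n)) (k : ℕ) :
    permMat (σ ^ k) = permMat σ ^ k := by
  simp only [permMat_eq_permMatrixHom, map_pow]

theorem permMat_one : permMat (1 : Equiv.Perm (QState n)) = 1 := by
  simp only [permMat_eq_permMatrixHom, map_one]

theorem permMat_injective : Function.Injective (permMat (n := n)) := by
  intro σ τ h
  refine Equiv.ext fun y => ?_
  simpa [permMat] using congrFun (congrFun h (σ y)) y

theorem star_permMat (σ : Equiv.Perm (QState n)) : star (permMat σ) = permMat σ⁻¹ := by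
  simp [permMat_eq_permMatrixHom, Matrix.star_eq_conjTranspose]

theorem permMat_mem_unitaryGroup (σ : Equiv.Perm (QState n)) :
    permMat σ ∈ Matrix.unitaryGroup (QState n) ℂ := by
  rw [Matrix.mem_unitaryGroup_iff, star_permMat, ← permMat_mul, mul_inv_cancel, permMat_one]

theorem permMat_mul_mul_star (σ : Equiv.Perm (QState n)) (M : QMat n) :
    permMat σ * M * star (permMat σ) = M.submatrix σ.symm σ.symm := by
  rw [star_permMat, permMat_eq_permMatrixHom, permMat_eq_permMatrixHom]
  simp [PEquiv.toMatrix_toPEquiv_mul, PEquiv.mul_toMatrix_toPEquiv]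

end PermMat

theorem neg_one_pow_val_add {R : Type*} [Ring R] (a b : ZMod 2) :
    (-1 : R) ^ (a + b).val = (-1) ^ a.val * (-1) ^ b.val := by
  rw [ZMod.val_add, ← neg_one_pow_eq_pow_mod_two, pow_add]

section AffineConjugation

variable {n : ℕ}

theorem XStr_submatrix_symm (π : QState n ≃ᵃ[ZMod 2] QState n) (v : QState n) :
    (XStr v).submatrix π.symm.toEquiv π.symm.toEquiv = XStr (π.linear v) := by
  ext x y
  have hπ : π (π.symm y + v) = y + π.linear v := by
    rw [add_comm, ← vadd_eq_add, π.map_vadd, π.apply_symm_apply, vadd_eq_add, add_comm]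
  simp only [XStr, Matrix.submatrix_apply, Matrix.of_apply, AffineEquiv.coe_toEquiv,
    π.symm_apply_eq, hπ]

/- `x ↦ w ⬝ᵥ π⁻¹ x` is affine: a dot product with `w'` plus a constant, which becomes the
phase `c = ±1`. -/
theorem exists_ZStr_submatrix_symm_eq_smul (π : QState n ≃ᵃ[ZMod 2] QState n)
    (w : QState n) : ∃ c : ℂ, c ^ 4 = 1 ∧ ∃ w' : QState n,
      (ZStr w).submatrix π.symm.toEquiv π.symm.toEquiv = c • ZStr w' := by
  set L := π.symm.linear.toLinearMap
  have hπ : ∀ x, π.symm x = L x + π.symm 0 := fun x =>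
    congrFun (AffineMap.decomp π.symm.toAffineMap) x
  refine ⟨(-1) ^ (w ⬝ᵥ π.symm 0).val, ?_, Matrix.vecMul w (LinearMap.toMatrix' L), ?_⟩
  · rw [← pow_mul, mul_comm, pow_mul]
    norm_num
  · rw [ZStr, ZStr, Matrix.submatrix_diagonal_equiv, ← Matrix.diagonal_smul]
    congr 1
    funext x
    change (-1 : ℂ) ^ (w ⬝ᵥ π.symm x).val =
      _ * (-1) ^ (Matrix.vecMul w (LinearMap.toMatrix' L) ⬝ᵥ x).val
    rw [hπ, dotProduct_add, ← Matrix.dotProduct_mulVec, LinearMap.toMatrix'_mulVec,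
      neg_one_pow_val_add, mul_comm]

theorem permMat_conj_mem_pauli (π : QState n ≃ᵃ[ZMod 2] QState n) {P : QMat n}
    (hP : P ∈ Pauli n) : permMat π.toEquiv * P * star (permMat π.toEquiv) ∈ Pauli n := by
  obtain ⟨c, v, w, hc, rfl⟩ := hP
  obtain ⟨d, hd, w', hw⟩ := exists_ZStr_submatrix_symm_eq_smul π w
  refine ⟨c * d, π.linear v, w', by rw [mul_pow, hc, hd, one_mul], ?_⟩
  rw [Matrix.mul_smul, Matrix.smul_mul, permMat_mul_mul_star, ← AffineEquiv.toEquiv_symm,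
    ← Matrix.submatrix_mul_equiv _ _ _ π.symm.toEquiv, XStr_submatrix_symm, hw,
    Matrix.mul_smul, smul_smul]

theorem conj_mem_CH {V : QMat n} (hV : V ∈ Matrix.unitaryGroup (QState n) ℂ)
    (hVP : ∀ P ∈ Pauli n, V * P * star V ∈ Pauli n)
    (hVP' : ∀ P ∈ Pauli n, star V * P * V ∈ Pauli n) :
    ∀ (k : ℕ) {U : QMat n}, U ∈ CH n k → V * U * star V ∈ CH n k
  | 0, U, hU => by
    rw [Set.mem_singleton_iff.mp hU, mul_one]
    exact (Matrix.mem_unitaryGroup_iff.mp hV : _)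
  | 1, _, hU => hVP _ hU
  | k + 2, U, ⟨hU, hUP⟩ => by
    refine ⟨mul_mem (mul_mem hV hU) (Unitary.star_mem hV), fun P hP => ?_⟩
    convert conj_mem_CH hV hVP hVP' (k + 1) (hUP _ (hVP' P hP)) using 1
    simp only [star_mul, star_star, mul_assoc]

theorem InCH.permMat_conj (π : QState n ≃ᵃ[ZMod 2] QState n) {U : QMat n}
    (hU : InCH U) : InCH (permMat π.toEquiv * U * star (permMat π.toEquiv)) := by
  have hstar : star (permMat π.toEquiv) = permMat π.symm.toEquiv := star_permMat _
  obtain ⟨k, hk⟩ := hU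
  refine ⟨k, conj_mem_CH (permMat_mem_unitaryGroup _) (fun P => permMat_conj_mem_pauli π)
    (fun P hP => ?_) k hk⟩
  have h := permMat_conj_mem_pauli π.symm hP
  rwa [star_permMat, show π.symm.toEquiv⁻¹ = π.toEquiv from rfl, ← hstar] at h

end AffineConjugation

section Hyperplane

variable {K : Type*} [Field K]

theorem exists_hyperplane_of_card_le_finrank {V : Type*} [AddCommGroup V] [Module K V]
    [FiniteDimensional K V] (S : Finset V) (hne : S.Nonempty)
    (hS : S.card ≤ Module.finrank K V) :
    ∃ f : V →ₗ[K] K, f ≠ 0 ∧ ∃ c, ∀ s ∈ S, f s = c := by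
  classical
  obtain ⟨s₀, hs₀⟩ := hne
  have hcard : 0 < S.card := Finset.card_pos.2 ⟨s₀, hs₀⟩
  have hlt : vectorSpan K (S : Set V) < ⊤ := by
    apply Submodule.lt_top_of_finrank_lt_finrank
    have hspan := finrank_vectorSpan_image_finset_le K id S (n := S.card - 1) (by omega)
    rw [Finset.image_id] at hspan
    omega
  obtain ⟨f, hf, hker⟩ := (vectorSpan K (S : Set V)).exists_le_ker_of_lt_top hlt
  refine ⟨f, hf, f s₀, fun s hs => ?_⟩
  have h := hker (vsub_mem_vectorSpan K hs hs₀)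
  rwa [LinearMap.mem_ker, vsub_eq_sub, map_sub, sub_eq_zero] at h

/- The witness is `x ↦ (f x, x (swap 0 i 1), …, x (swap 0 i m))` for an `i` with
`f (Pi.single i 1) ≠ 0`; it is injective, hence bijective. -/
theorem exists_linearEquiv_apply_zero_eq {m : ℕ} (f : (Fin (m + 1) → K) →ₗ[K] K)
    (hf : f ≠ 0) :
    ∃ e : (Fin (m + 1) → K) ≃ₗ[K] (Fin (m + 1) → K), ∀ x, e x 0 = f x := by
  obtain ⟨i, hi⟩ : ∃ i, f (Pi.single i 1) ≠ 0 := by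
    by_contra! h
    exact hf ((Pi.basisFun K _).ext fun i => by simpa using h i)
  let L : (Fin (m + 1) → K) →ₗ[K] (Fin (m + 1) → K) :=
    LinearMap.pi (Function.update (fun j => LinearMap.proj (Equiv.swap 0 i j)) 0 f)
  have hL0 : ∀ x, L x 0 = f x := by simp [L]
  have hL : ∀ x j, j ≠ 0 → L x j = x (Equiv.swap 0 i j) := by
    intro x j hj
    simp [L, Function.update_of_ne hj]
  have hinj : Function.Injective L := by
    rw [← LinearMap.ker_eq_bot, LinearMap.ker_eq_bot']
    intro x hx
    have hxk : ∀ k, k ≠ i → x k = 0 := fun k hk => by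
      have hk0 : Equiv.swap 0 i k ≠ 0 := by
        rwa [Ne, Equiv.swap_apply_eq_iff, Equiv.swap_apply_left]
      simpa using (hL x _ hk0).symm.trans (congrFun hx _)
    have hx_eq : x = x i • Pi.single i 1 := by
      ext k
      by_cases hk : k = i
      · subst hk; simp
      · simp [hk, hxk k hk]
    have hxi : x i * f (Pi.single i 1) = 0 := by
      rw [← smul_eq_mul, ← map_smul, ← hx_eq, ← hL0, hx, Pi.zero_apply]
    rw [hx_eq, (mul_eq_zero.mp hxi).resolve_right hi, zero_smul]
  exact ⟨LinearEquiv.ofInjectiveEndo L hinj, hL0⟩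

theorem exists_affineEquiv_apply_zero_eq_one {m : ℕ} (S : Finset (Fin (m + 1) → K))
    (hS : S.card ≤ m + 1) :
    ∃ π : (Fin (m + 1) → K) ≃ᵃ[K] (Fin (m + 1) → K), ∀ s ∈ S, π s 0 = 1 := by
  rcases S.eq_empty_or_nonempty with rfl | hne
  · exact ⟨AffineEquiv.refl K _, by simp⟩
  obtain ⟨f, hf, c, hc⟩ :=
    exists_hyperplane_of_card_le_finrank S hne (by rwa [Module.finrank_fin_fun])
  obtain ⟨e, he⟩ := exists_linearEquiv_apply_zero_eq f hf
  refine ⟨e.toAffineEquiv.trans (AffineEquiv.constVAdd K _ (Pi.single 0 (1 - c))),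
    fun s hs => ?_⟩
  simp [he, hc s hs]

end Hyperplane

section ControlledPerm

variable {m : ℕ}

def controlOneEquiv (m : ℕ) : {x : QState (m + 1) // x 0 = 1} ≃ QState m where
  toFun x := Fin.tail x.1
  invFun y := ⟨Fin.cons 1 y, rfl⟩
  left_inv x := Subtype.ext (by simp [← x.2])
  right_inv y := Fin.tail_cons _ _

def controlledPerm : Equiv.Perm (QState m) →* Equiv.Perm (QState (m + 1)) :=
  Equiv.Perm.ofSubtype.comp (controlOneEquiv m).symm.permCongrHom.toMonoidHom

theorem controlledPerm_cons_zero (τ : Equiv.Perm (QState m)) (y : QState m) :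
    controlledPerm τ (Fin.cons 0 y) = Fin.cons 0 y :=
  Equiv.Perm.ofSubtype_apply_of_not_mem _ (by simp)

theorem controlledPerm_cons_one (τ : Equiv.Perm (QState m)) (y : QState m) :
    controlledPerm τ (Fin.cons 1 y) = Fin.cons 1 (τ y) := by
  simpa [controlledPerm, controlOneEquiv, Equiv.permCongr_apply] using
    Equiv.Perm.ofSubtype_apply_coe ((controlOneEquiv m).symm.permCongr τ)
      ((controlOneEquiv m).symm y)

theorem permMat_controlledPerm (τ : Equiv.Perm (QState m)) :
    permMat (controlledPerm τ) = controlled (permMat τ) := by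
  ext x y
  induction x using Fin.consCases with | cons a x =>
  induction y using Fin.consCases with | cons b y =>
  have hbit : ∀ a : ZMod 2, a = 0 ∨ a = 1 := by decide
  rcases hbit a with rfl | rfl <;> rcases hbit b with rfl | rfl <;>
    simp [permMat, controlled, controlledPerm_cons_zero, controlledPerm_cons_one, Fin.cons_inj,
      eq_comm]

theorem exists_controlledPerm_eq (ρ : Equiv.Perm (QState (m + 1)))
    (hρ : ∀ x, ρ x ≠ x → x 0 = 1) : ∃ τ, controlledPerm τ = ρ := by
  have hmem : ∀ x, ρ x 0 = 1 ↔ x 0 = 1 := by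
    intro x
    by_cases hx : ρ x = x
    · rw [hx]
    · exact iff_of_true (hρ _ fun h => hx (ρ.injective h)) (hρ x hx)
  refine ⟨(controlOneEquiv m).symm.permCongrHom.symm (ρ.subtypePerm hmem), ?_⟩
  simp only [controlledPerm, MonoidHom.comp_apply, MulEquiv.coe_toMonoidHom,
    MulEquiv.apply_symm_apply]
  exact Equiv.Perm.ofSubtype_subtypePerm hmem hρ

end ControlledPerm

theorem exists_pow_two_pow_eq_one_of_inCH {m : ℕ}
    (hAW : ∀ U : QMat m, U ∈ Matrix.unitaryGroup (QState m) ℂ →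
      InCH (controlled U) → ∃ k : ℕ, U ^ (2 ^ k) = 1)
    (σ : Equiv.Perm (QState (m + 1))) (hcard : σ.support.card ≤ m + 1)
    (hσ : InCH (permMat σ)) : ∃ k : ℕ, σ ^ (2 ^ k) = 1 := by
  obtain ⟨π, hπ⟩ := exists_affineEquiv_apply_zero_eq_one σ.support hcard
  have hsupp : ∀ x, (π.toEquiv * σ * π.toEquiv⁻¹) x ≠ x → x 0 = 1 := by
    intro x hx
    have hx' := Equiv.Perm.mem_support.mpr hx
    rw [Equiv.Perm.support_conj, Finset.mem_map] at hx'
    obtain ⟨s, hs, rfl⟩ := hx'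
    exact hπ s hs
  obtain ⟨τ, hτ⟩ := exists_controlledPerm_eq _ hsupp
  have hCH : InCH (controlled (permMat τ)) := by
    rw [← permMat_controlledPerm, hτ, permMat_mul, permMat_mul, ← star_permMat]
    exact hσ.permMat_conj π
  obtain ⟨k, hk⟩ := hAW _ (permMat_mem_unitaryGroup τ) hCH
  have hτk : τ ^ (2 ^ k) = 1 := permMat_injective (by rw [permMat_pow, hk, permMat_one])
  refine ⟨k, ?_⟩
  rw [← conj_eq_one_iff (a := π.toEquiv), ← conj_pow, ← hτ, ← map_pow, hτk, map_one]

theorem exists_eq_two_pow_of_mem_cycleType {α : Type*} [Fintype α] [DecidableEq α]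
    {σ : Equiv.Perm α} {k n : ℕ} (hσ : σ ^ (2 ^ k) = 1) (hn : n ∈ σ.cycleType) :
    ∃ j : ℕ, 1 ≤ j ∧ n = 2 ^ j := by
  obtain ⟨j, -, rfl⟩ := (Nat.dvd_prime_pow Nat.prime_two).mp
    ((Equiv.Perm.dvd_of_mem_cycleType hn).trans (orderOf_dvd_of_pow_eq_one hσ))
  refine ⟨j, Nat.one_le_iff_ne_zero.mpr ?_, rfl⟩
  rintro rfl
  simpa using Equiv.Perm.two_le_of_mem_cycleType hn

/-- assuming the Anderson–Weippert theorem (a controlled-U gate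
in the Clifford Hierarchy forces U in the Hierarchy with U^{2^k} = I), any
permutation on m qubits with a length-k cycle structure, m > k - 1, that lies
in the Clifford Hierarchy has all nontrivial cycle lengths equal to powers of
two (each exponent ≥ 1). -/
theorem cycle_lengths_pow_two_of_in_CH
    (hAW : ∀ (m : ℕ) (U : QMat m), U ∈ Matrix.unitaryGroup (QState m) ℂ →
      InCH (controlled U) → InCH U ∧ ∃ k : ℕ, U ^ (2 ^ k) = 1) :
    ∀ (m : ℕ) (σ : Equiv.Perm (QState m)),
      σ.support.card ≤ m → InCH (permMat σ) →
      ∀ c ∈ σ.cycleFactorsFinset, ∃ j : ℕ, 1 ≤ j ∧ c.support.card = 2 ^ j := by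
  intro m σ hcard hσ c hc
  have hlen : c.support.card ∈ σ.cycleType := by
    rw [Equiv.Perm.cycleType_def]
    exact Multiset.mem_map_of_mem _ hc
  obtain ⟨m, rfl⟩ : ∃ m', m = m' + 1 := Nat.exists_eq_succ_of_ne_zero <| by
    have := (Equiv.Perm.two_le_of_mem_cycleType hlen).trans
      (Equiv.Perm.le_card_support_of_mem_cycleType hlen)
    omega
  obtain ⟨k, hk⟩ :=
    exists_pow_two_pow_eq_one_of_inCH (fun U hU hC => (hAW m U hU hC).2) σ hcard hσ
  exact exists_eq_two_pow_of_mem_cycleType hk hlen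
end CHPaper
end
end
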